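/- (Quasi-multiplicativity) Under the standing assumptions, for any finite words w, τ over {1,…,N}, M⁻¹·T_w·T_τ ≤ T_{wτ} ≤ M·T_w·T_τ, where M = C₂², T_ξ = sup_{x∈X} (Df_ξ)(x), and wτ denotes concatenation of words. -/
import Mathlib


open Filter Topology

/-- `f` is an infinitesimal similitude at `x` with value `D`. -/
def IsInfSimAt {X Y : Type*} [MetricSpace X] [MetricSpace Y] (f : X → Y) (x : X) (D : ℝ) : Prop :=
  ∀ u v : ℕ → X, (∀ m, u m ≠ v m) →
    Tendsto u atTop (𝓝 x) → Tendsto v atTop (𝓝 x) →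
    Tendsto (fun m => dist (f (u m)) (f (v m)) / dist (u m) (v m)) atTop (𝓝 D)

/-- For a word `w = w₁…wₙ`, `fw f w = f_{w₁} ∘ ⋯ ∘ f_{wₙ}`. -/
def fw {X : Type*} {N : ℕ} (f : Fin N → X → X) : List (Fin N) → X → X
  | [], x => x
  | i :: w, x => f i (fw f w x)

/-- The infinitesimal similitude of `f_w`, given via the chain rule. -/
def Dfw {X : Type*} {N : ℕ} (f : Fin N → X → X) (Df : Fin N → X → ℝ) :
    List (Fin N) → X → ℝ
  | [], _ => 1
  | i :: w, x => Df i (fw f w x) * Dfw f Df w x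

lemma fw_append {X : Type*} {N : ℕ} (f : Fin N → X → X) (w τ : List (Fin N)) (x : X) :
    fw f (w ++ τ) x = fw f w (fw f τ x) := by
  induction w with
  | nil => simp [fw]
  | cons i w ih => simp [fw, ih]

lemma Dfw_append {X : Type*} {N : ℕ} (f : Fin N → X → X) (Df : Fin N → X → ℝ)
    (w τ : List (Fin N)) (x : X) :
    Dfw f Df (w ++ τ) x = Dfw f Df w (fw f τ x) * Dfw f Df τ x := by
  induction w with
  | nil => simp [Dfw]
  | cons i w ih => simp [Dfw, fw_append, ih]; ring

lemma Dfw_pos {X : Type*} {N : ℕ} (f : Fin N → X → X) (Df : Fin N → X → ℝ)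
    (hpos : ∀ i x, 0 < Df i x) (w : List (Fin N)) (x : X) : 0 < Dfw f Df w x := by
  induction w with
  | nil => norm_num [Dfw]
  | cons i w ih => exact mul_pos (hpos i _) ih

lemma fw_lip {X : Type*} [MetricSpace X] {N : ℕ} (f : Fin N → X → X)
    (hcontr : ∀ i, ∃ c : ℝ, c < 1 ∧ ∀ x y, dist (f i x) (f i y) ≤ c * dist x y)
    (w : List (Fin N)) :
    ∃ B : ℝ, 0 ≤ B ∧ ∀ x y, dist (fw f w x) (fw f w y) ≤ B * dist x y := by
  induction w with
  | nil => exact ⟨1, by norm_num, by simp [fw]⟩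
  | cons i w ih =>
    obtain ⟨B, hB0, hB⟩ := ih
    obtain ⟨c, _, hc⟩ := hcontr i
    refine ⟨max c 0 * B, by positivity, fun x y => ?_⟩
    calc dist (fw f (i :: w) x) (fw f (i :: w) y)
        ≤ c * dist (fw f w x) (fw f w y) := hc _ _
      _ ≤ max c 0 * dist (fw f w x) (fw f w y) :=
          mul_le_mul_of_nonneg_right (le_max_left _ _) dist_nonneg
      _ ≤ max c 0 * (B * dist x y) :=
          mul_le_mul_of_nonneg_left (hB _ _) (le_max_right _ _)
      _ = max c 0 * B * dist x y := by ring

lemma Dfw_bdd {X : Type*} [MetricSpace X] [Nonempty X] {N : ℕ} (f : Fin N → X → X)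
    (Df : Fin N → X → ℝ) (C₂ : ℝ) (hC₂ : 0 < C₂)
    (hcontr : ∀ i, ∃ c : ℝ, c < 1 ∧ ∀ x y, dist (f i x) (f i y) ≤ c * dist x y)
    (hdist : ∀ (w : List (Fin N)) (x y : X), x ≠ y →
      Dfw f Df w x / C₂ ≤ dist (fw f w x) (fw f w y) / dist x y ∧
      dist (fw f w x) (fw f w y) / dist x y ≤ C₂ * Dfw f Df w x)
    (w : List (Fin N)) : BddAbove (Set.range (Dfw f Df w)) := by
  by_cases h : ∃ x y : X, x ≠ y
  · obtain ⟨x₀, y₀, hxy⟩ := h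
    obtain ⟨B, hB0, hB⟩ := fw_lip f hcontr w
    refine ⟨C₂ * B, ?_⟩
    rintro _ ⟨z, rfl⟩
    obtain ⟨y, hy⟩ : ∃ y, z ≠ y := by
      by_cases hz : z = x₀
      · exact ⟨y₀, hz ▸ hxy⟩
      · exact ⟨x₀, hz⟩
    have h1 := (hdist w z y hy).1
    have hd : 0 < dist z y := dist_pos.mpr hy
    have h2 : dist (fw f w z) (fw f w y) / dist z y ≤ B := by
      rw [div_le_iff₀ hd]
      exact hB z y
    have := h1.trans h2
    rw [div_le_iff₀ hC₂] at this
    linarith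
  · push_neg at h
    obtain ⟨x₀⟩ := ‹Nonempty X›
    refine ⟨Dfw f Df w x₀, ?_⟩
    rintro _ ⟨z, rfl⟩
    rw [h z x₀]


/-- Quasi-multiplicativity: with `M = C₂²`, `M⁻¹ T_w T_τ ≤ T_{wτ} ≤ M T_w T_τ`,
where `T_ξ = sup_x (Df_ξ)(x)` and `wτ` is concatenation. -/
theorem quasi_multiplicativity {X : Type*} [MetricSpace X] [CompactSpace X] [Nonempty X]
    {N : ℕ} (f : Fin N → X → X) (Df : Fin N → X → ℝ) (C₁ C₂ : ℝ)
    (hsim : ∀ i x, IsInfSimAt (f i) x (Df i x))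
    (hcontr : ∀ i, ∃ c : ℝ, c < 1 ∧ ∀ x y, dist (f i x) (f i y) ≤ c * dist x y)
    (hpos : ∀ i x, 0 < Df i x)
    (hC₁ : 1 < C₁) (hC₁₂ : C₁ ≤ C₂)
    (hTR : ∀ w : List (Fin N), (⨆ x, Dfw f Df w x) ≤ C₁ * (⨅ x, Dfw f Df w x))
    (hdist : ∀ (w : List (Fin N)) (x y : X), x ≠ y →
      Dfw f Df w x / C₂ ≤ dist (fw f w x) (fw f w y) / dist x y ∧
      dist (fw f w x) (fw f w y) / dist x y ≤ C₂ * Dfw f Df w x) :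
    ∀ w τ : List (Fin N),
      (C₂ ^ 2)⁻¹ * (⨆ x, Dfw f Df w x) * (⨆ x, Dfw f Df τ x) ≤ (⨆ x, Dfw f Df (w ++ τ) x) ∧
      (⨆ x, Dfw f Df (w ++ τ) x) ≤ C₂ ^ 2 * (⨆ x, Dfw f Df w x) * (⨆ x, Dfw f Df τ x) := by
  have hC₂ : 1 < C₂ := hC₁.trans_le hC₁₂
  have hC₂0 : 0 < C₂ := by linarith
  intro w τ
  set S : List (Fin N) → ℝ := fun ξ => ⨆ x, Dfw f Df ξ x with hS
  have bdd : ∀ ξ, BddAbove (Set.range (Dfw f Df ξ)) :=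
    Dfw_bdd f Df C₂ hC₂0 hcontr hdist
  have hle : ∀ ξ x, Dfw f Df ξ x ≤ S ξ := fun ξ x => le_ciSup (bdd ξ) x
  obtain ⟨x₀⟩ := ‹Nonempty X›
  have Spos : ∀ ξ, 0 < S ξ := fun ξ =>
    (Dfw_pos f Df hpos ξ x₀).trans_le (hle ξ x₀)
  have hinfle : ∀ ξ x, (⨅ y, Dfw f Df ξ y) ≤ Dfw f Df ξ x := fun ξ x =>
    ciInf_le ⟨0, by rintro _ ⟨z, rfl⟩; exact (Dfw_pos f Df hpos ξ z).le⟩ x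
  have hSle : ∀ ξ x, S ξ ≤ C₁ * Dfw f Df ξ x := fun ξ x =>
    (hTR ξ).trans (mul_le_mul_of_nonneg_left (hinfle ξ x) (by linarith))
  constructor
  · -- lower bound
    have key : S w * S τ ≤ C₁ * S (w ++ τ) := by
      have : S w * S τ = ⨆ x, S w * Dfw f Df τ x :=
        Real.mul_iSup_of_nonneg (Spos w).le _
      rw [this]
      refine ciSup_le fun x => ?_
      calc S w * Dfw f Df τ x
          ≤ (C₁ * Dfw f Df w (fw f τ x)) * Dfw f Df τ x :=
            mul_le_mul_of_nonneg_right (hSle w _) (Dfw_pos f Df hpos τ x).le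
        _ = C₁ * Dfw f Df (w ++ τ) x := by rw [Dfw_append]; ring
        _ ≤ C₁ * S (w ++ τ) :=
            mul_le_mul_of_nonneg_left (hle _ x) (by linarith)
    have hC₁C₂ : C₁ ≤ C₂ ^ 2 := by nlinarith
    have h1 : (C₂ ^ 2)⁻¹ * (S w * S τ) ≤ C₁⁻¹ * (S w * S τ) := by
      apply mul_le_mul_of_nonneg_right _ (mul_pos (Spos w) (Spos τ)).le
      exact inv_anti₀ (by linarith) hC₁C₂
    have h2 : C₁⁻¹ * (S w * S τ) ≤ S (w ++ τ) := by
      rw [inv_mul_le_iff₀ (by linarith)]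
      linarith [key]
    calc (C₂ ^ 2)⁻¹ * S w * S τ = (C₂ ^ 2)⁻¹ * (S w * S τ) := by ring
      _ ≤ S (w ++ τ) := h1.trans h2
  · -- upper bound
    refine ciSup_le fun x => ?_
    have : Dfw f Df (w ++ τ) x ≤ S w * S τ := by
      rw [Dfw_append]
      exact mul_le_mul (hle w _) (hle τ x) (Dfw_pos f Df hpos τ x).le (Spos w).le
    have h1 : S w * S τ ≤ C₂ ^ 2 * (S w * S τ) := by
      have h2 : (1:ℝ) ≤ C₂ ^ 2 := by nlinarith
      exact le_mul_of_one_le_left (mul_pos (Spos w) (Spos τ)).le h2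
    calc Dfw f Df (w ++ τ) x ≤ S w * S τ := this
      _ ≤ C₂ ^ 2 * S w * S τ := by rw [mul_assoc]; exact h1
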